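/- arXiv:2205.05505 — 3 statements merged into one kernel-verified Lean document; each statement's English description precedes it below -/
import Mathlib

section
/- In the cell decomposition of the bi-objective space with n Pareto points, a cell C(i,j) with i + j ≤ n lies (except for boundary) in the non-dominated region of the augmented Pareto set, and a cell C(i,j) with i + j > n lies in the dominated region: concretely, the interior of C(i,j) is disjoint from the dominated set of P iff i + j ≤ n. -/
/-- The cell `C(i,j)` of the bi-objective cell decomposition with extended-real boundaries. -/
def Cell (Q1 Q2 : ℕ → EReal) (n i j : ℕ) : Set (ℝ × ℝ) :=
  {y | Q1 i ≤ (y.1 : EReal) ∧ (y.1 : EReal) ≤ Q1 (i + 1) ∧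
       Q2 (n + 1 - j) ≤ (y.2 : EReal) ∧ (y.2 : EReal) ≤ Q2 (n - j)}

/-!
The interior of `C(i,j)` is the open box `(q₁⁽ⁱ⁾, q₁⁽ⁱ⁺¹⁾) × (q₂⁽ⁿ⁺¹⁻ʲ⁾, q₂⁽ⁿ⁻ʲ⁾)`. Since `q₁` increases
and `q₂` decreases, a Pareto point `q⁽ᵏ⁾` dominates a point of this box only if `n - j < k ≤ i`,
and conversely `q⁽ⁿ⁺¹⁻ʲ⁾` dominates the whole box once `n + 1 - j ≤ i`.
-/

open Set Filter Topology

theorem EReal.interior_preimage_coe_Icc (a b : EReal) :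
    interior (((↑) : ℝ → EReal) ⁻¹' Icc a b) = (↑) ⁻¹' Ioo a b := by
  apply Subset.antisymm
  · intro x hx
    have hnhds : ∀ᶠ y in 𝓝 x, y ∈ ((↑) : ℝ → EReal) ⁻¹' Icc a b :=
      mem_interior_iff_mem_nhds.1 hx
    obtain ⟨x₀, hx₀x, ha, -⟩ := hnhds.exists_lt
    obtain ⟨x₁, hxx₁, -, hb⟩ := hnhds.exists_gt
    exact ⟨ha.trans_lt (EReal.coe_lt_coe hx₀x), (EReal.coe_lt_coe hxx₁).trans_le hb⟩
  · exact interior_maximal (preimage_mono Ioo_subset_Icc_self)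
      (isOpen_Ioo.preimage continuous_coe_real_ereal)

theorem cell_eq_prod (Q1 Q2 : ℕ → EReal) (n i j : ℕ) :
    Cell Q1 Q2 n i j = ((↑) ⁻¹' Icc (Q1 i) (Q1 (i + 1))) ×ˢ
      ((↑) ⁻¹' Icc (Q2 (n + 1 - j)) (Q2 (n - j))) := by
  ext y
  simp [Cell, and_assoc]

theorem interior_cell (Q1 Q2 : ℕ → EReal) (n i j : ℕ) :
    interior (Cell Q1 Q2 n i j) = ((↑) ⁻¹' Ioo (Q1 i) (Q1 (i + 1))) ×ˢ
      ((↑) ⁻¹' Ioo (Q2 (n + 1 - j)) (Q2 (n - j))) := by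
  rw [cell_eq_prod, interior_prod_eq, EReal.interior_preimage_coe_Icc,
    EReal.interior_preimage_coe_Icc]

theorem cell_nondominated_iff_general (n : ℕ) (Q1 Q2 : ℕ → EReal)
    (hQ1 : ∀ k l, k < l → l ≤ n + 1 → Q1 k < Q1 l)
    (hQ2 : ∀ k l, k < l → l ≤ n + 1 → Q2 l < Q2 k) :
    ∀ i j, i ≤ n → j ≤ n →
      (interior (Cell Q1 Q2 n i j) ∩
          {y : ℝ × ℝ | ∃ k, 1 ≤ k ∧ k ≤ n ∧ Q1 k ≤ (y.1 : EReal) ∧ Q2 k ≤ (y.2 : EReal)} = ∅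
        ↔ i + j ≤ n) := by
  intro i j hi hj
  have hmono : StrictMonoOn Q1 (Iic (n + 1)) := fun k _ l hl hkl => hQ1 k l hkl hl
  have hanti : StrictAntiOn Q2 (Iic (n + 1)) := fun k _ l hl hkl => hQ2 k l hkl hl
  rw [interior_cell, eq_empty_iff_forall_notMem]
  constructor
  · intro hdisj
    by_contra! hgt
    obtain ⟨x₁, hx₁i, hx₁i'⟩ :=
      EReal.exists_between_coe_real (hQ1 i (i + 1) (by omega) (by omega))
    obtain ⟨x₂, hx₂j, hx₂j'⟩ :=
      EReal.exists_between_coe_real (hQ2 (n - j) (n + 1 - j) (by omega) (by omega))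
    have hQ1le : Q1 (n + 1 - j) ≤ Q1 i :=
      (hmono.le_iff_le (mem_Iic.2 (by omega)) (mem_Iic.2 (by omega))).2 (by omega)
    exact hdisj (x₁, x₂) ⟨⟨⟨hx₁i, hx₁i'⟩, hx₂j, hx₂j'⟩, n + 1 - j, by omega, by omega,
      hQ1le.trans hx₁i.le, hx₂j.le⟩
  · rintro hle y ⟨⟨⟨-, hy₁⟩, -, hy₂⟩, k, -, hkn, hk₁, hk₂⟩
    have hki : k < i + 1 := (hmono.lt_iff_lt (mem_Iic.2 (by omega))
      (mem_Iic.2 (by omega))).1 (hk₁.trans_lt hy₁)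
    have hjk : n - j < k := (hanti.lt_iff_gt (mem_Iic.2 (by omega))
      (mem_Iic.2 (by omega))).1 (hk₂.trans_lt hy₂)
    omega

/-- The interior of the cell `C(i,j)` is disjoint from the region dominated by the Pareto set
`P = {(Q₁ k, Q₂ k) : 1 ≤ k ≤ n}` if and only if `i + j ≤ n`. -/
theorem cell_nondominated_iff (n : ℕ) (Q1 Q2 : ℕ → EReal) (r : ℝ × ℝ)
    (hQ1 : ∀ k l, k < l → l ≤ n + 1 → Q1 k < Q1 l)
    (hQ2 : ∀ k l, k < l → l ≤ n + 1 → Q2 l < Q2 k)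
    (h10 : Q1 0 = ⊥) (h1r : Q1 (n + 1) = (r.1 : EReal))
    (h20 : Q2 0 = (r.2 : EReal)) (h2r : Q2 (n + 1) = ⊥) :
    ∀ i j, i ≤ n → j ≤ n →
      (interior (Cell Q1 Q2 n i j) ∩
          {y : ℝ × ℝ | ∃ k, 1 ≤ k ∧ k ≤ n ∧ Q1 k ≤ (y.1 : EReal) ∧ Q2 k ≤ (y.2 : EReal)} = ∅
        ↔ i + j ≤ n) :=
  cell_nondominated_iff_general n Q1 Q2 hQ1 hQ2
end

section
/- For y in a non-dominated cell C(i,j) (i + j ≤ n) of the bi-objective cell decomposition, the hypervolume improvement decomposes as Δ⁺(y) = (q₁^{(n+1−j)} − y₁)(q₂^{(i)} − y₂) + γ^{(i,j)}, where γ^{(i,j)} = Δ⁺(u^{(i,j)}) − (q₁^{(n+1−j)} − u₁^{(i,j)})(q₂^{(i)} − u₂^{(i,j)}) is a constant depending only on the cell. -/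
open MeasureTheory

/-- The 2-D hypervolume indicator. -/
noncomputable def HV2 (A : Finset (ℝ × ℝ)) (r : ℝ × ℝ) : ℝ :=
  (volume (⋃ a ∈ A, Set.Icc a r)).toReal

/-!
Write `D` for the region dominated by `P`, `u` for the upper corner of the cell and
`c = (q₁⁽ⁿ⁺¹⁻ʲ⁾, q₂⁽ⁱ⁾)`. Since `y ≤ u`, `Δ⁺(y) − Δ⁺(u)` is the area of `(Icc y r \ Icc u r) \ D`.
The points `q⁽ⁿ⁺¹⁻ʲ⁾` and `q⁽ⁱ⁾` dominate everything of this region right of `c₁` or above `c₂`,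
and every other point of `P` strictly below `c` in both coordinates lies above `u`. So, up to the
two null lines through `c`, the region is the L-shaped `Icc y c \ Icc u c`, of area
`(c₁ − y₁)(c₂ − y₂) − (c₁ − u₁)(c₂ − u₂)`.
-/

open Set

def dominated (P : Finset (ℝ × ℝ)) (r : ℝ × ℝ) : Set (ℝ × ℝ) := ⋃ p ∈ P, Icc p r

lemma mem_dominated {P : Finset (ℝ × ℝ)} {r x : ℝ × ℝ} :
    x ∈ dominated P r ↔ ∃ p ∈ P, p ≤ x ∧ x ≤ r := by
  simp only [dominated, mem_iUnion₂, mem_Icc, exists_prop]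

lemma measurableSet_dominated (P : Finset (ℝ × ℝ)) (r : ℝ × ℝ) :
    MeasurableSet (dominated P r) :=
  P.measurableSet_biUnion fun _ _ => measurableSet_Icc

lemma isCompact_dominated (P : Finset (ℝ × ℝ)) (r : ℝ × ℝ) : IsCompact (dominated P r) :=
  P.isCompact_biUnion fun _ _ => isCompact_Icc

lemma HV2_insert_sub_HV2 (P : Finset (ℝ × ℝ)) (y r : ℝ × ℝ) :
    HV2 (insert y P) r - HV2 P r = volume.real (Icc y r \ dominated P r) := by
  have hunion : ⋃ p ∈ insert y P, Icc p r = dominated P r ∪ (Icc y r \ dominated P r) := by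
    rw [union_sdiff_self, union_comm, dominated, Finset.set_biUnion_insert]
  rw [sub_eq_iff_eq_add', HV2, hunion, ← measureReal_def,
    measureReal_union disjoint_sdiff_right
      (measurableSet_Icc.diff (measurableSet_dominated P r))
      (isCompact_dominated P r).measure_ne_top
      (ne_top_of_le_ne_top isCompact_Icc.measure_ne_top (measure_mono sdiff_subset))]
  rfl

lemma measureReal_sdiff_sub_sdiff {α : Type*} [MeasurableSpace α] {μ : Measure α}
    {A B U : Set α} (hBA : B ⊆ A) (hB : MeasurableSet B) (hU : MeasurableSet U)
    (hA : μ A ≠ ⊤) :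
    μ.real (A \ U) - μ.real (B \ U) = μ.real ((A \ B) \ U) := by
  rw [← measureReal_sdiff (sdiff_subset_sdiff_left hBA) (hB.diff hU)
    (ne_top_of_le_ne_top hA (measure_mono sdiff_subset))]
  congr 1
  ext x
  simp only [mem_sdiff]
  tauto

lemma volume_real_Icc_of_le {p q : ℝ × ℝ} (hpq : p ≤ q) :
    volume.real (Icc p q) = (q.1 - p.1) * (q.2 - p.2) := by
  rw [Icc_prod_eq, Measure.volume_eq_prod, measureReal_prod_prod,
    Real.volume_real_Icc_of_le hpq.1, Real.volume_real_Icc_of_le hpq.2]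

lemma volume_real_Icc_sdiff_Icc {y u c : ℝ × ℝ} (hyu : y ≤ u) (huc : u ≤ c) :
    volume.real (Icc y c \ Icc u c) =
      (c.1 - y.1) * (c.2 - y.2) - (c.1 - u.1) * (c.2 - u.2) := by
  rw [measureReal_sdiff (Icc_subset_Icc_left hyu) measurableSet_Icc
    isCompact_Icc.measure_ne_top, volume_real_Icc_of_le (hyu.trans huc),
    volume_real_Icc_of_le huc]

lemma volume_fst_preimage_singleton (a : ℝ) :
    volume (Prod.fst ⁻¹' {a} : Set (ℝ × ℝ)) = 0 := by
  rw [← prod_univ, Measure.volume_eq_prod, Measure.prod_prod, Real.volume_singleton, zero_mul]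

lemma volume_snd_preimage_singleton (b : ℝ) :
    volume (Prod.snd ⁻¹' {b} : Set (ℝ × ℝ)) = 0 := by
  rw [← univ_prod, Measure.volume_eq_prod, Measure.prod_prod, Real.volume_singleton, mul_zero]

lemma volume_sdiff_dominated_eq_of_corner {P : Finset (ℝ × ℝ)} {l y u c r : ℝ × ℝ}
    (hly : l ≤ y) (hcr : c ≤ r) (hc1 : (c.1, l.2) ∈ P) (hc2 : (l.1, c.2) ∈ P)
    (hu : ∀ p ∈ P, p.1 < c.1 → p.2 < c.2 → u ≤ p) :
    volume ((Icc y r \ Icc u r) \ dominated P r) = volume (Icc y c \ Icc u c) := by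
  refine measure_eq_measure_of_null_sdiff ?_ (measure_mono_null ?_ (measure_union_null
    (volume_fst_preimage_singleton c.1) (volume_snd_preimage_singleton c.2)))
  · rintro x ⟨⟨⟨hyx, hxr⟩, hux⟩, hxD⟩
    have hxc : x ≤ c :=
      ⟨not_lt.1 fun h => hxD (mem_dominated.2 ⟨_, hc1, ⟨h.le, hly.2.trans hyx.2⟩, hxr⟩),
        not_lt.1 fun h => hxD (mem_dominated.2 ⟨_, hc2, ⟨hly.1.trans hyx.1, h.le⟩, hxr⟩)⟩
    exact ⟨⟨hyx, hxc⟩, fun h => hux ⟨h.1, hxr⟩⟩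
  · rintro x ⟨⟨⟨hyx, hxc⟩, hux⟩, hx⟩
    have hxD : x ∈ dominated P r := by
      by_contra hxD
      exact hx ⟨⟨⟨hyx, hxc.trans hcr⟩, fun h => hux ⟨h.1, hxc⟩⟩, hxD⟩
    obtain ⟨p, hp, hpx, -⟩ := mem_dominated.1 hxD
    by_contra hline
    simp only [mem_union, mem_preimage, mem_singleton_iff, not_or] at hline
    have hxc' : x.1 < c.1 ∧ x.2 < c.2 :=
      ⟨lt_of_le_of_ne hxc.1 hline.1, lt_of_le_of_ne hxc.2 hline.2⟩
    exact hux ⟨(hu p hp (hpx.1.trans_lt hxc'.1) (hpx.2.trans_lt hxc'.2)).trans hpx, hxc⟩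

lemma cell_upper_le_of_lt_corner {n : ℕ} {q1 q2 : ℕ → ℝ} (hq1 : StrictMonoOn q1 (Icc 1 n))
    (hq2 : StrictAntiOn q2 (Icc 1 n)) {i j : ℕ} (hi : 1 ≤ i) (hj : 1 ≤ j) (hij : i + j ≤ n) :
    ∀ p ∈ (Finset.Icc 1 n).image (fun k => (q1 k, q2 k)),
      p.1 < q1 (n + 1 - j) → p.2 < q2 i → (q1 (i + 1), q2 (n - j)) ≤ p := by
  rintro _ hp h1 h2
  obtain ⟨k, hk, rfl⟩ := Finset.mem_image.1 hp
  have hk : k ∈ Icc 1 n := Finset.mem_Icc.1 hk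
  have hik : i < k := (hq2.lt_iff_gt hk ⟨hi, by omega⟩).1 h2
  have hkj : k < n + 1 - j := (hq1.lt_iff_lt hk ⟨by omega, by omega⟩).1 h1
  exact ⟨hq1.monotoneOn ⟨by omega, by omega⟩ hk (by omega),
    hq2.antitoneOn hk ⟨by omega, by omega⟩ (by omega)⟩

/-- For `y` in a non-dominated cell `C(i,j)` (with `1 ≤ i`, `1 ≤ j`, `i + j ≤ n`) of the
bi-objective cell decomposition, the hypervolume improvement decomposes as
`Δ⁺(y) = (q₁⁽ⁿ⁺¹⁻ʲ⁾ − y₁)(q₂⁽ⁱ⁾ − y₂) + γ⁽ⁱʲ⁾`, with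
`γ⁽ⁱʲ⁾ = Δ⁺(u⁽ⁱʲ⁾) − (q₁⁽ⁿ⁺¹⁻ʲ⁾ − u₁⁽ⁱʲ⁾)(q₂⁽ⁱ⁾ − u₂⁽ⁱʲ⁾)` depending only on the cell,
where `u⁽ⁱʲ⁾ = (q₁⁽ⁱ⁺¹⁾, q₂⁽ⁿ⁻ʲ⁾)` is the upper-right corner of the cell. -/
theorem hvi2_cell_decomposition (n : ℕ) (q1 q2 : ℕ → ℝ) (r : ℝ × ℝ)
    (hmono : ∀ k l, 1 ≤ k → k < l → l ≤ n → q1 k < q1 l ∧ q2 l < q2 k)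
    (hr : ∀ k, 1 ≤ k → k ≤ n → q1 k < r.1 ∧ q2 k < r.2)
    (P : Finset (ℝ × ℝ)) (hP : P = (Finset.Icc 1 n).image fun k => (q1 k, q2 k))
    (i j : ℕ) (hi : 1 ≤ i) (hj : 1 ≤ j) (hij : i + j ≤ n)
    (y : ℝ × ℝ)
    (hy1 : q1 i ≤ y.1) (hy1' : y.1 ≤ q1 (i + 1))
    (hy2 : q2 (n + 1 - j) ≤ y.2) (hy2' : y.2 ≤ q2 (n - j)) :
    HV2 (insert y P) r - HV2 P r =
      (q1 (n + 1 - j) - y.1) * (q2 i - y.2) +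
        ((HV2 (insert (q1 (i + 1), q2 (n - j)) P) r - HV2 P r) -
          (q1 (n + 1 - j) - q1 (i + 1)) * (q2 i - q2 (n - j))) := by
  have hq1 : StrictMonoOn q1 (Icc 1 n) := fun k hk l hl hkl => (hmono k l hk.1 hkl hl.2).1
  have hq2 : StrictAntiOn q2 (Icc 1 n) := fun k hk l hl hkl => (hmono k l hk.1 hkl hl.2).2
  have mem_P : ∀ k ∈ Icc 1 n, (q1 k, q2 k) ∈ P := fun k hk =>
    hP ▸ Finset.mem_image_of_mem _ (Finset.mem_Icc.2 hk)
  set u : ℝ × ℝ := (q1 (i + 1), q2 (n - j))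
  set c : ℝ × ℝ := (q1 (n + 1 - j), q2 i)
  have hyu : y ≤ u := ⟨hy1', hy2'⟩
  have huc : u ≤ c := ⟨hq1.monotoneOn ⟨by omega, by omega⟩ ⟨by omega, by omega⟩ (by omega),
    hq2.antitoneOn ⟨hi, by omega⟩ ⟨by omega, by omega⟩ (by omega)⟩
  have hcr : c ≤ r := ⟨(hr _ (by omega) (by omega)).1.le, (hr i hi (by omega)).2.le⟩
  have hcorner := volume_sdiff_dominated_eq_of_corner (l := (q1 i, q2 (n + 1 - j)))
    ⟨hy1, hy2⟩ hcr (mem_P _ ⟨by omega, by omega⟩) (mem_P i ⟨hi, by omega⟩)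
    (hP ▸ cell_upper_le_of_lt_corner hq1 hq2 hi hj hij)
  have hstep : HV2 (insert y P) r - HV2 (insert u P) r =
      (c.1 - y.1) * (c.2 - y.2) - (c.1 - u.1) * (c.2 - u.2) := by
    rw [← sub_sub_sub_cancel_right _ _ (HV2 P r), HV2_insert_sub_HV2, HV2_insert_sub_HV2,
      measureReal_sdiff_sub_sdiff (Icc_subset_Icc_left hyu) measurableSet_Icc
        (measurableSet_dominated _ _) isCompact_Icc.measure_ne_top,
      ← volume_real_Icc_sdiff_Icc hyu huc]
    exact congrArg ENNReal.toReal hcorner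
  linarith
end

section
/- Let X₁, X₂ be independent truncated normals on [L₁, U₁] and [L₂, U₂] with 0 < Lₖ < Uₖ, as above. Then for p ∈ [L₁L₂, U₁U₂], P(X₁X₂ ≤ p) = D₁D₂ [ Φ₂(U₂)(Φ₁(α(p)) − Φ₁(L₁)) + Φ₂(L₂)(Φ₁(L₁) − Φ₁(β(p))) + ∫_{α(p)}^{β(p)} φ₁(ζ) Φ₂(p/ζ) dζ ] (up to the normalizing constants being applied consistently), where Φₖ = Φ_{μₖ',σₖ}, φ₁ = φ_{μ₁',σ₁}, and α, β are the integration bounds from the piecewise definition. -/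
open MeasureTheory ProbabilityTheory Real

/-- The Gaussian PDF with mean `μ` and standard deviation `σ`. -/
noncomputable def phi (μ σ x : ℝ) : ℝ := gaussianPDFReal μ ⟨σ ^ 2, sq_nonneg σ⟩ x

/-- The Gaussian CDF with mean `μ` and standard deviation `σ`. -/
noncomputable def Phi (μ σ x : ℝ) : ℝ := ∫ t in Set.Iic x, phi μ σ t

/-!
By independence, `P(X₁X₂ ≤ p) = ∫_{L₁}^{U₁} D₁ φ₁(x) F₂(p / x) dx`, where
`F₂(y) = D₂ (Φ₂(clamp y) - Φ₂(L₂))`, with `clamp` the projection onto `[L₂, U₂]`, is the CDF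
of `X₂`. For `x ≤ α(p)` we have `p / x ≥ U₂`, so `F₂(p / x) = D₂ (Φ₂(U₂) - Φ₂(L₂))`; for
`α(p) ≤ x ≤ β(p)` the argument `p / x` lies in `[L₂, U₂]`; for `x ≥ β(p)` it is `≤ L₂` and
`F₂` vanishes. Integrating over the three pieces gives the formula.
-/

open Set

lemma phi_nonneg (μ σ x : ℝ) : 0 ≤ phi μ σ x := gaussianPDFReal_nonneg _ _ _

lemma continuous_phi (μ σ : ℝ) : Continuous (phi μ σ) := by
  unfold phi gaussianPDFReal
  fun_prop

lemma integrable_phi (μ σ : ℝ) : Integrable (phi μ σ) := integrable_gaussianPDFReal _ _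

lemma integral_phi (μ σ a b : ℝ) : ∫ t in a..b, phi μ σ t = Phi μ σ b - Phi μ σ a :=
  (intervalIntegral.integral_Iic_sub_Iic (integrable_phi μ σ).integrableOn
    (integrable_phi μ σ).integrableOn).symm

lemma continuous_Phi (μ σ : ℝ) : Continuous (Phi μ σ) := by
  have h : Phi μ σ = fun x => Phi μ σ 0 + ∫ t in (0 : ℝ)..x, phi μ σ t := by
    funext x
    rw [integral_phi]
    ring
  rw [h]
  exact continuous_const.add ((integrable_phi μ σ).continuous_primitive 0)

lemma monotone_Phi (μ σ : ℝ) : Monotone (Phi μ σ) := fun a b hab => by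
  have := intervalIntegral.integral_nonneg (μ := volume) hab fun x _ => phi_nonneg μ σ x
  rwa [integral_phi, sub_nonneg] at this

lemma continuousOn_Phi_div (μ σ p : ℝ) : ContinuousOn (fun x => Phi μ σ (p / x)) (Ioi 0) :=
  (continuous_Phi μ σ).comp_continuousOn
    (continuousOn_const.div continuousOn_id fun _ hx => (mem_Ioi.mp hx).ne')

lemma setLIntegral_Ioc_ofReal {f : ℝ → ℝ} {a b : ℝ} (hab : a ≤ b)
    (hf : IntegrableOn f (Ioc a b)) (hf₀ : ∀ x ∈ Ioc a b, 0 ≤ f x) :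
    ∫⁻ x in Ioc a b, ENNReal.ofReal (f x) = ENNReal.ofReal (∫ x in a..b, f x) := by
  rw [intervalIntegral.integral_of_le hab,
    ofReal_integral_eq_lintegral_ofReal hf (ae_restrict_of_forall_mem measurableSet_Ioc hf₀)]

lemma intervalIntegrable_of_continuousOn_Ioi {f : ℝ → ℝ} (hf : ContinuousOn f (Ioi 0))
    {c d : ℝ} (hc : 0 < c) (hd : 0 < d) : IntervalIntegrable f volume c d :=
  (hf.mono fun _ hx => (lt_min hc hd).trans_le hx.1).intervalIntegrable

lemma ProbabilityTheory.IndepFun.measure_preimage_prod_eq_lintegral {Ω β γ : Type*}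
    [MeasurableSpace Ω] [MeasurableSpace β] [MeasurableSpace γ] {μ : Measure Ω}
    [IsFiniteMeasure μ] {X : Ω → β} {Y : Ω → γ} (hX : Measurable X) (hY : Measurable Y)
    (hXY : IndepFun X Y μ) {S : Set (β × γ)} (hS : MeasurableSet S) :
    μ ((fun ω => (X ω, Y ω)) ⁻¹' S) = ∫⁻ x, μ.map Y (Prod.mk x ⁻¹' S) ∂μ.map X := by
  rw [← Measure.map_apply (hX.prodMk hY) hS,
    (indepFun_iff_map_prod_eq_prod_map_map hX.aemeasurable hY.aemeasurable).mp hXY,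
    Measure.prod_apply hS]

noncomputable def truncGaussian (μ σ L U D : ℝ) : Measure ℝ :=
  volume.withDensity fun x => ENNReal.ofReal ((Icc L U).indicator (fun t => D * phi μ σ t) x)

/-- The clamp `max L (min U y)` makes this the CDF of `truncGaussian μ σ L U D` on all of `ℝ`. -/
noncomputable def truncGaussianCDF (μ σ L U D y : ℝ) : ℝ :=
  D * (Phi μ σ (max L (min U y)) - Phi μ σ L)

section TruncGaussian

variable {μ σ L U D : ℝ}

instance : SFinite (truncGaussian μ σ L U D) := by
  rw [truncGaussian]
  infer_instance

lemma truncGaussian_eq_withDensity_restrict :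
    truncGaussian μ σ L U D =
      (volume.restrict (Icc L U)).withDensity fun t => ENNReal.ofReal (D * phi μ σ t) := by
  rw [← withDensity_indicator measurableSet_Icc, truncGaussian]
  congr 1
  funext x
  exact (congr_fun (indicator_comp_of_zero ENNReal.ofReal_zero) x).symm

lemma lintegral_truncGaussian {g : ℝ → ENNReal} (hg : Measurable g) :
    ∫⁻ x, g x ∂truncGaussian μ σ L U D =
      ∫⁻ x in Icc L U, ENNReal.ofReal (D * phi μ σ x) * g x := by
  have hf : Measurable fun t => ENNReal.ofReal (D * phi μ σ t) :=
    (continuous_const.mul (continuous_phi μ σ)).measurable.ennreal_ofReal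
  rw [truncGaussian_eq_withDensity_restrict, lintegral_withDensity_eq_lintegral_mul _ hf hg]
  rfl

lemma truncGaussian_Iic (hD : 0 ≤ D) (y : ℝ) :
    truncGaussian μ σ L U D (Iic y) = ENNReal.ofReal (truncGaussianCDF μ σ L U D y) := by
  have hset : (Iic y ∩ Icc L U : Set ℝ) =ᵐ[volume] Ioc L (max L (min U y)) := by
    have : Ioc L (max L (min U y)) = Iic y ∩ Ioc L U := by
      rw [inter_comm, Ioc_inter_Iic]
      ext x
      simp only [mem_Ioc, le_max_iff]
      grind
    rw [this]
    exact (ae_eq_refl _).inter Ioc_ae_eq_Icc.symm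
  rw [truncGaussian_eq_withDensity_restrict, withDensity_apply _ measurableSet_Iic,
    Measure.restrict_restrict measurableSet_Iic, setLIntegral_congr hset,
    setLIntegral_Ioc_ofReal (le_max_left _ _) ((integrable_phi μ σ).const_mul D).integrableOn
      fun x _ => mul_nonneg hD (phi_nonneg μ σ x),
    intervalIntegral.integral_const_mul, integral_phi, truncGaussianCDF]

lemma continuous_truncGaussianCDF : Continuous (truncGaussianCDF μ σ L U D) :=
  continuous_const.mul (((continuous_Phi μ σ).comp
    (continuous_const.max (continuous_const.min continuous_id))).sub continuous_const)

lemma truncGaussianCDF_nonneg (hD : 0 ≤ D) (y : ℝ) : 0 ≤ truncGaussianCDF μ σ L U D y :=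
  mul_nonneg hD (sub_nonneg.mpr (monotone_Phi μ σ (le_max_left _ _)))

lemma truncGaussianCDF_of_le {y : ℝ} (hy : y ≤ L) : truncGaussianCDF μ σ L U D y = 0 := by
  rw [truncGaussianCDF, max_eq_left ((min_le_right U y).trans hy), sub_self, mul_zero]

lemma truncGaussianCDF_of_mem {y : ℝ} (hy : y ∈ Icc L U) :
    truncGaussianCDF μ σ L U D y = D * (Phi μ σ y - Phi μ σ L) := by
  rw [truncGaussianCDF, min_eq_right hy.2, max_eq_right hy.1]

lemma truncGaussianCDF_of_ge (hLU : L ≤ U) {y : ℝ} (hy : U ≤ y) :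
    truncGaussianCDF μ σ L U D y = D * (Phi μ σ U - Phi μ σ L) := by
  rw [truncGaussianCDF, min_eq_left hy, max_eq_right hLU]

end TruncGaussian

section Product

variable {μ₁ σ₁ L₁ U₁ D₁ μ₂ σ₂ L₂ U₂ D₂ : ℝ}

lemma continuousOn_phi_mul_truncGaussianCDF_div (p : ℝ) :
    ContinuousOn (fun x => D₁ * phi μ₁ σ₁ x * truncGaussianCDF μ₂ σ₂ L₂ U₂ D₂ (p / x))
      (Ioi 0) :=
  (continuous_const.mul (continuous_phi μ₁ σ₁)).continuousOn.mul
    (continuous_truncGaussianCDF.comp_continuousOn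
      (continuousOn_const.div continuousOn_id fun _ hx => (mem_Ioi.mp hx).ne'))

lemma lintegral_truncGaussian_mul_le (hL₁ : 0 < L₁) (hLU₁ : L₁ ≤ U₁) (hD₁ : 0 ≤ D₁)
    (hD₂ : 0 ≤ D₂) (p : ℝ) :
    ∫⁻ x, truncGaussian μ₂ σ₂ L₂ U₂ D₂ {y | x * y ≤ p} ∂truncGaussian μ₁ σ₁ L₁ U₁ D₁ =
      ENNReal.ofReal
        (∫ x in L₁..U₁, D₁ * phi μ₁ σ₁ x * truncGaussianCDF μ₂ σ₂ L₂ U₂ D₂ (p / x)) := by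
  have hpos : Icc L₁ U₁ ⊆ Ioi 0 := fun x hx => hL₁.trans_le hx.1
  have hcdf : ∀ x ∈ Icc L₁ U₁, ENNReal.ofReal (D₁ * phi μ₁ σ₁ x) *
      truncGaussian μ₂ σ₂ L₂ U₂ D₂ {y | x * y ≤ p} =
        ENNReal.ofReal (D₁ * phi μ₁ σ₁ x * truncGaussianCDF μ₂ σ₂ L₂ U₂ D₂ (p / x)) := by
    intro x hx
    have hxy : {y | x * y ≤ p} = Iic (p / x) := by
      ext y
      exact (le_div_iff₀' (mem_Ioi.mp (hpos hx))).symm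
    rw [hxy, truncGaussian_Iic hD₂, ENNReal.ofReal_mul (mul_nonneg hD₁ (phi_nonneg _ _ _))]
  have hg : Measurable fun x => truncGaussian μ₂ σ₂ L₂ U₂ D₂ {y | x * y ≤ p} :=
    measurable_measure_prodMk_left
      (measurableSet_le (measurable_fst.mul measurable_snd) measurable_const)
  rw [lintegral_truncGaussian hg, setLIntegral_congr_fun measurableSet_Icc hcdf,
    setLIntegral_congr Ioc_ae_eq_Icc.symm,
    setLIntegral_Ioc_ofReal hLU₁
      (((continuousOn_phi_mul_truncGaussianCDF_div p).mono hpos).integrableOn_Icc.mono_set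
        Ioc_subset_Icc_self)
      fun x _ => mul_nonneg (mul_nonneg hD₁ (phi_nonneg _ _ _)) (truncGaussianCDF_nonneg hD₂ _)]

lemma integral_phi_mul_truncGaussianCDF_div_of_ge {p c d : ℝ} (hcd : c ≤ d) (hLU₂ : L₂ ≤ U₂)
    (h : ∀ x ∈ Ioc c d, U₂ ≤ p / x) :
    ∫ x in c..d, D₁ * phi μ₁ σ₁ x * truncGaussianCDF μ₂ σ₂ L₂ U₂ D₂ (p / x) =
      D₁ * D₂ * (Phi μ₂ σ₂ U₂ - Phi μ₂ σ₂ L₂) * (Phi μ₁ σ₁ d - Phi μ₁ σ₁ c) := by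
  rw [← integral_phi μ₁ σ₁, ← intervalIntegral.integral_const_mul]
  refine intervalIntegral.integral_congr_ae (Filter.Eventually.of_forall fun x hx => ?_)
  rw [uIoc_of_le hcd] at hx
  rw [truncGaussianCDF_of_ge hLU₂ (h x hx)]
  ring

lemma integral_phi_mul_truncGaussianCDF_div_of_mem {p c d : ℝ} (hc : 0 < c) (hcd : c ≤ d)
    (h : ∀ x ∈ Ioc c d, p / x ∈ Icc L₂ U₂) :
    ∫ x in c..d, D₁ * phi μ₁ σ₁ x * truncGaussianCDF μ₂ σ₂ L₂ U₂ D₂ (p / x) =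
      D₁ * D₂ * ((∫ ζ in c..d, phi μ₁ σ₁ ζ * Phi μ₂ σ₂ (p / ζ)) -
        Phi μ₂ σ₂ L₂ * (Phi μ₁ σ₁ d - Phi μ₁ σ₁ c)) := by
  have hprod : IntervalIntegrable (fun x => phi μ₁ σ₁ x * Phi μ₂ σ₂ (p / x)) volume c d :=
    intervalIntegrable_of_continuousOn_Ioi
      ((continuous_phi μ₁ σ₁).continuousOn.mul (continuousOn_Phi_div μ₂ σ₂ p)) hc
      (hc.trans_le hcd)
  rw [← integral_phi, ← intervalIntegral.integral_const_mul,
    ← intervalIntegral.integral_sub hprod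
      ((integrable_phi μ₁ σ₁).intervalIntegrable.const_mul _),
    ← intervalIntegral.integral_const_mul]
  refine intervalIntegral.integral_congr_ae (Filter.Eventually.of_forall fun x hx => ?_)
  rw [uIoc_of_le hcd] at hx
  rw [truncGaussianCDF_of_mem (h x hx)]
  ring

lemma integral_phi_mul_truncGaussianCDF_div_of_le {p c d : ℝ} (hcd : c ≤ d)
    (h : ∀ x ∈ Ioc c d, p / x ≤ L₂) :
    ∫ x in c..d, D₁ * phi μ₁ σ₁ x * truncGaussianCDF μ₂ σ₂ L₂ U₂ D₂ (p / x) = 0 := by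
  refine (intervalIntegral.integral_congr_ae (g := fun _ => 0)
    (Filter.Eventually.of_forall fun x hx => ?_)).trans intervalIntegral.integral_zero
  rw [uIoc_of_le hcd] at hx
  rw [truncGaussianCDF_of_le (h x hx), mul_zero]

lemma integral_phi_mul_truncGaussianCDF_div {p a b : ℝ}
    (hL₁ : 0 < L₁) (hL₂ : 0 < L₂) (hLU₂ : L₂ ≤ U₂)
    (ha : a = max L₁ (p / U₂)) (hb : b = min (p / L₂) U₁) (hab : a ≤ b) :
    ∫ x in L₁..U₁, D₁ * phi μ₁ σ₁ x * truncGaussianCDF μ₂ σ₂ L₂ U₂ D₂ (p / x) =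
      D₁ * D₂ * (Phi μ₂ σ₂ U₂ * (Phi μ₁ σ₁ a - Phi μ₁ σ₁ L₁) +
        Phi μ₂ σ₂ L₂ * (Phi μ₁ σ₁ L₁ - Phi μ₁ σ₁ b) +
        ∫ ζ in a..b, phi μ₁ σ₁ ζ * Phi μ₂ σ₂ (p / ζ)) := by
  have hU₂ : 0 < U₂ := hL₂.trans_le hLU₂
  have hLa : L₁ ≤ a := ha ▸ le_max_left _ _
  have hbU : b ≤ U₁ := hb ▸ min_le_right _ _
  have ha₀ : 0 < a := hL₁.trans_le hLa
  have hb₀ : 0 < b := ha₀.trans_le hab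
  have hF : ContinuousOn (fun x => D₁ * phi μ₁ σ₁ x * truncGaussianCDF μ₂ σ₂ L₂ U₂ D₂ (p / x))
      (Ioi 0) := continuousOn_phi_mul_truncGaussianCDF_div p
  have hlower : ∀ x ∈ Ioc L₁ a, U₂ ≤ p / x := fun x hx =>
    (le_div_comm₀ hU₂ (hL₁.trans hx.1)).mpr
      ((le_max_iff.mp (ha ▸ hx.2)).resolve_left (not_le.mpr hx.1))
  have hmiddle : ∀ x ∈ Ioc a b, p / x ∈ Icc L₂ U₂ := fun x hx =>
    ⟨(le_div_comm₀ hL₂ (ha₀.trans hx.1)).mpr (hx.2.trans (hb ▸ min_le_left _ _)),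
      (div_le_comm₀ (ha₀.trans hx.1) hU₂).mpr ((ha ▸ le_max_right _ _).trans hx.1.le)⟩
  have hupper : ∀ x ∈ Ioc b U₁, p / x ≤ L₂ := fun x hx =>
    (div_le_comm₀ (hb₀.trans hx.1) hL₂).mpr
      ((min_lt_iff.mp (hb ▸ hx.1)).resolve_right (not_lt.mpr hx.2)).le
  rw [← intervalIntegral.integral_add_adjacent_intervals
      (intervalIntegrable_of_continuousOn_Ioi hF hL₁ hb₀)
      (intervalIntegrable_of_continuousOn_Ioi hF hb₀ (hb₀.trans_le hbU)),
    ← intervalIntegral.integral_add_adjacent_intervals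
      (intervalIntegrable_of_continuousOn_Ioi hF hL₁ ha₀)
      (intervalIntegrable_of_continuousOn_Ioi hF ha₀ hb₀),
    integral_phi_mul_truncGaussianCDF_div_of_ge hLa hLU₂ hlower,
    integral_phi_mul_truncGaussianCDF_div_of_mem ha₀ hab hmiddle,
    integral_phi_mul_truncGaussianCDF_div_of_le hbU hupper]
  ring

end Product

lemma ite_lt_mul_eq_max {a c p : ℝ} (hc : 0 < c) :
    (if p < a * c then a else p / c) = max a (p / c) := by
  split_ifs with h
  · exact (max_eq_left ((div_le_iff₀ hc).mpr h.le)).symm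
  · exact (max_eq_right ((le_div_iff₀ hc).mpr (not_lt.mp h))).symm

lemma ite_lt_mul_eq_min {a c p : ℝ} (hc : 0 < c) :
    (if p < a * c then p / c else a) = min (p / c) a := by
  split_ifs with h
  · exact (min_eq_left ((div_le_iff₀ hc).mpr h.le)).symm
  · exact (min_eq_right ((le_div_iff₀ hc).mpr (not_lt.mp h))).symm

lemma max_div_le_min_div {L₁ U₁ L₂ U₂ p : ℝ} (hL₁ : 0 < L₁) (hLU₁ : L₁ ≤ U₁) (hL₂ : 0 < L₂)
    (hLU₂ : L₂ ≤ U₂) (hp : p ∈ Icc (L₁ * L₂) (U₁ * U₂)) :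
    max L₁ (p / U₂) ≤ min (p / L₂) U₁ :=
  max_le (le_min ((le_div_iff₀ hL₂).mpr hp.1) hLU₁)
    (le_min (div_le_div_of_nonneg_left ((mul_pos hL₁ hL₂).le.trans hp.1) hL₂ hLU₂)
      ((div_le_iff₀ (hL₂.trans_le hLU₂)).mpr hp.2))

theorem cdf_product_truncated_normal_general {Ω : Type*} [MeasureSpace Ω]
    [IsProbabilityMeasure (ℙ : Measure Ω)]
    (X₁ X₂ : Ω → ℝ) (hm₁ : Measurable X₁) (hm₂ : Measurable X₂)
    (hindep : IndepFun X₁ X₂)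
    (μ₁' μ₂' σ₁ σ₂ L₁ U₁ L₂ U₂ D₁ D₂ : ℝ)
    (hL₁ : 0 < L₁) (hU₁ : L₁ < U₁) (hL₂ : 0 < L₂) (hU₂ : L₂ < U₂)
    (hD₁ : D₁ = (Phi μ₁' σ₁ U₁ - Phi μ₁' σ₁ L₁)⁻¹)
    (hD₂ : D₂ = (Phi μ₂' σ₂ U₂ - Phi μ₂' σ₂ L₂)⁻¹)
    (hlaw₁ : Measure.map X₁ ℙ = volume.withDensity fun x =>
      ENNReal.ofReal ((Set.Icc L₁ U₁).indicator (fun t => D₁ * phi μ₁' σ₁ t) x))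
    (hlaw₂ : Measure.map X₂ ℙ = volume.withDensity fun x =>
      ENNReal.ofReal ((Set.Icc L₂ U₂).indicator (fun t => D₂ * phi μ₂' σ₂ t) x))
    (α β : ℝ → ℝ)
    (hα : ∀ p, α p = if p < L₁ * U₂ then L₁ else p / U₂)
    (hβ : ∀ p, β p = if p < U₁ * L₂ then p / L₂ else U₁) :
    ∀ p ∈ Set.Icc (L₁ * L₂) (U₁ * U₂),
      (ℙ {ω | X₁ ω * X₂ ω ≤ p}).toReal =
        D₁ * D₂ *
          (Phi μ₂' σ₂ U₂ * (Phi μ₁' σ₁ (α p) - Phi μ₁' σ₁ L₁) +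
            Phi μ₂' σ₂ L₂ * (Phi μ₁' σ₁ L₁ - Phi μ₁' σ₁ (β p)) +
            ∫ ζ in (α p)..(β p), phi μ₁' σ₁ ζ * Phi μ₂' σ₂ (p / ζ)) := by
  intro p hp
  have hD₁₀ : 0 ≤ D₁ := hD₁ ▸ inv_nonneg.mpr (sub_nonneg.mpr (monotone_Phi _ _ hU₁.le))
  have hD₂₀ : 0 ≤ D₂ := hD₂ ▸ inv_nonneg.mpr (sub_nonneg.mpr (monotone_Phi _ _ hU₂.le))
  have hαp : α p = max L₁ (p / U₂) := by rw [hα, ite_lt_mul_eq_max (hL₂.trans hU₂)]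
  have hβp : β p = min (p / L₂) U₁ := by rw [hβ, ite_lt_mul_eq_min hL₂]
  have hαβ : α p ≤ β p := hαp ▸ hβp ▸ max_div_le_min_div hL₁ hU₁.le hL₂ hU₂.le hp
  have hprod : ℙ {ω | X₁ ω * X₂ ω ≤ p} = ∫⁻ x, truncGaussian μ₂' σ₂ L₂ U₂ D₂ {y | x * y ≤ p}
      ∂truncGaussian μ₁' σ₁ L₁ U₁ D₁ := by
    rw [truncGaussian, truncGaussian, ← hlaw₁, ← hlaw₂]
    exact hindep.measure_preimage_prod_eq_lintegral hm₁ hm₂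
      (measurableSet_le (measurable_fst.mul measurable_snd) measurable_const)
  rw [hprod, lintegral_truncGaussian_mul_le hL₁ hU₁.le hD₁₀ hD₂₀,
    ENNReal.toReal_ofReal (intervalIntegral.integral_nonneg hU₁.le fun x _ =>
      mul_nonneg (mul_nonneg hD₁₀ (phi_nonneg _ _ _)) (truncGaussianCDF_nonneg hD₂₀ _)),
    integral_phi_mul_truncGaussianCDF_div hL₁ hL₂ hU₂.le hαp hβp hαβ]

/-- The CDF of the product `X₁X₂` of two independent truncated normals: for
`p ∈ [L₁L₂, U₁U₂]` (in the case `L₁U₂ < U₁L₂`),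
`P(X₁X₂ ≤ p) = D₁D₂ [Φ₂(U₂)(Φ₁(α(p)) − Φ₁(L₁)) + Φ₂(L₂)(Φ₁(L₁) − Φ₁(β(p)))
  + ∫_{α(p)}^{β(p)} φ₁(ζ) Φ₂(p/ζ) dζ]`. -/
theorem cdf_product_truncated_normal {Ω : Type*} [MeasureSpace Ω]
    [IsProbabilityMeasure (ℙ : Measure Ω)]
    (X₁ X₂ : Ω → ℝ) (hm₁ : Measurable X₁) (hm₂ : Measurable X₂)
    (hindep : IndepFun X₁ X₂)
    (μ₁' μ₂' σ₁ σ₂ L₁ U₁ L₂ U₂ D₁ D₂ : ℝ)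
    (hσ₁ : 0 < σ₁) (hσ₂ : 0 < σ₂)
    (hL₁ : 0 < L₁) (hU₁ : L₁ < U₁) (hL₂ : 0 < L₂) (hU₂ : L₂ < U₂)
    (hD₁ : D₁ = (Phi μ₁' σ₁ U₁ - Phi μ₁' σ₁ L₁)⁻¹)
    (hD₂ : D₂ = (Phi μ₂' σ₂ U₂ - Phi μ₂' σ₂ L₂)⁻¹)
    (hlaw₁ : Measure.map X₁ ℙ = volume.withDensity fun x =>
      ENNReal.ofReal ((Set.Icc L₁ U₁).indicator (fun t => D₁ * phi μ₁' σ₁ t) x))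
    (hlaw₂ : Measure.map X₂ ℙ = volume.withDensity fun x =>
      ENNReal.ofReal ((Set.Icc L₂ U₂).indicator (fun t => D₂ * phi μ₂' σ₂ t) x))
    (hcross : L₁ * U₂ < U₁ * L₂)
    (α β : ℝ → ℝ)
    (hα : ∀ p, α p = if p < L₁ * U₂ then L₁ else p / U₂)
    (hβ : ∀ p, β p = if p < U₁ * L₂ then p / L₂ else U₁) :
    ∀ p ∈ Set.Icc (L₁ * L₂) (U₁ * U₂),
      (ℙ {ω | X₁ ω * X₂ ω ≤ p}).toReal =
        D₁ * D₂ *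
          (Phi μ₂' σ₂ U₂ * (Phi μ₁' σ₁ (α p) - Phi μ₁' σ₁ L₁) +
            Phi μ₂' σ₂ L₂ * (Phi μ₁' σ₁ L₁ - Phi μ₁' σ₁ (β p)) +
            ∫ ζ in (α p)..(β p), phi μ₁' σ₁ ζ * Phi μ₂' σ₂ (p / ζ)) :=
  cdf_product_truncated_normal_general X₁ X₂ hm₁ hm₂ hindep μ₁' μ₂' σ₁ σ₂ L₁ U₁ L₂ U₂ D₁ D₂ hL₁ hU₁
    hL₂ hU₂ hD₁ hD₂ hlaw₁ hlaw₂ α β hα hβ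
end
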